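/- Heavy–light case (combinatorial core of Lemma 4.7, with corrected constants): Let V be a finite type and let β, β', λ, λ', T be nonnegative real numbers with β + β' < 1, such that C := 1/2 − (β+β')/(2(1−β−β')) − (λ+λ') > 0 and T ≥ 2/(C·(2−β−β')). Let N_x, N_y, N_z, Ñ_x, Ñ_z be finite subsets of V with Ñ_x ⊆ N_x and Ñ_z ⊆ N_z, such that: |N_x| ≥ T and |N_y| ≥ T; |N_x △ N_y| < (β+β')·max(|N_x|, |N_y|); |N_y △ N_z| < (β+β')·max(|N_y|, |N_z|); |N_x \ Ñ_x| < (λ+λ')·|N_x|; and |N_z \ Ñ_z| < (λ+λ')·|N_z|. Then |Ñ_x ∩ Ñ_z| ≥ 2. -/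

import Mathlib

/-!
With `b = β + β'`, closeness `|s △ t| < b · max |s| |t|` forces `(1 - b) · max |s| |t| ≤ min |s| |t|`.
Through `N_y`, the triangle inequality for `△` then gives `(1 - b) |N_x △ N_z| ≤ b (|N_x| + |N_z|)`,
so `|N_x ∩ N_z| = (|N_x| + |N_z| - |N_x △ N_z|) / 2` is at least `(1/2 - b/(2(1-b))) (|N_x| + |N_z|)`.
Sparsification removes fewer than `(λ + λ') (|N_x| + |N_z|)` of these vertices, leaving at least
`C (|N_x| + |N_z|) ≥ C (2 - b) T ≥ 2`, because `|N_z| ≥ (1 - b) |N_y| ≥ (1 - b) T`.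
-/

namespace Finset

open scoped symmDiff

variable {α : Type*} [DecidableEq α]

theorem card_symmDiff_le_add (s t u : Finset α) : #(s ∆ u) ≤ #(s ∆ t) + #(t ∆ u) :=
  (card_le_card (symmDiff_triangle s t u)).trans (card_union_le _ _)

theorem card_symmDiff_add_two_mul_card_inter (s t : Finset α) :
    #(s ∆ t) + 2 * #(s ∩ t) = #s + #t := by
  rw [symmDiff_eq_sup_sdiff_inf, ← card_union_add_card_inter s t, two_mul, ← add_assoc,
    sup_eq_union, inf_eq_inter, card_sdiff_add_card_eq_card inter_subset_union]

theorem card_le_card_add_card_symmDiff (s t : Finset α) : #t ≤ #s + #(s ∆ t) := by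
  have := card_symmDiff_add_two_mul_card_inter s t
  have := card_le_card (inter_subset_left (s₁ := s) (s₂ := t))
  omega

theorem card_inter_le_card_inter_add_card_sdiff_add_card_sdiff (s t s' t' : Finset α) :
    #(s ∩ t) ≤ #(s' ∩ t') + #(s \ s') + #(t \ t') := by
  calc #(s ∩ t) ≤ #((s' ∩ t') ∪ (s \ s') ∪ (t \ t')) := card_le_card fun x hx => by
          simp only [mem_union, mem_inter, mem_sdiff] at hx ⊢; tauto
    _ ≤ _ := (card_union_le _ _).trans (Nat.add_le_add_right (card_union_le _ _) _)

def NearlyAgree (b : ℝ) (s t : Finset α) : Prop :=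
  (#(s ∆ t) : ℝ) < b * max (#s : ℝ) #t

namespace NearlyAgree

variable {b : ℝ} {s t u : Finset α}

theorem symm (h : NearlyAgree b s t) : NearlyAgree b t s := by
  rwa [NearlyAgree, symmDiff_comm, max_comm]

theorem pos (h : NearlyAgree b s t) : 0 < b :=
  pos_of_mul_pos_left ((Nat.cast_nonneg _).trans_lt h) (le_max_of_le_left (Nat.cast_nonneg _))

theorem one_sub_mul_max_le_left (h : NearlyAgree b s t) : (1 - b) * max (#s : ℝ) #t ≤ #s := by
  have : (#t : ℝ) ≤ #s + #(s ∆ t) := mod_cast card_le_card_add_card_symmDiff s t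
  have hb := h.pos
  unfold NearlyAgree at h
  rcases le_total (#s : ℝ) #t with hst | hts
  · rw [max_eq_right hst] at h ⊢; linarith
  · rw [max_eq_left hts]; exact mul_le_of_le_one_left (Nat.cast_nonneg _) (by linarith)

theorem one_sub_mul_card_le_right (h : NearlyAgree b s t) (hb : b ≤ 1) :
    (1 - b) * #s ≤ #t :=
  (mul_le_mul_of_nonneg_left (le_max_right _ _) (sub_nonneg.2 hb)).trans
    h.symm.one_sub_mul_max_le_left

theorem one_sub_mul_card_symmDiff_le (hst : NearlyAgree b s t) (htu : NearlyAgree b t u)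
    (hb : b ≤ 1) : (1 - b) * #(s ∆ u) ≤ b * (#s + #u) := by
  have htri : (#(s ∆ u) : ℝ) ≤ #(s ∆ t) + #(t ∆ u) := mod_cast card_symmDiff_le_add s t u
  have hs := hst.one_sub_mul_max_le_left
  have hu := htu.symm.one_sub_mul_max_le_left
  rw [max_comm] at hu
  calc (1 - b) * #(s ∆ u) ≤ (1 - b) * (#(s ∆ t) + #(t ∆ u)) :=
        mul_le_mul_of_nonneg_left htri (sub_nonneg.2 hb)
    _ ≤ (1 - b) * (b * max (#s : ℝ) #t + b * max (#t : ℝ) #u) :=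
        mul_le_mul_of_nonneg_left (add_le_add hst.le htu.le) (sub_nonneg.2 hb)
    _ = b * ((1 - b) * max (#s : ℝ) #t + (1 - b) * max (#t : ℝ) #u) := by ring
    _ ≤ b * (#s + #u) := by
        have := hst.pos
        gcongr

theorem mul_card_add_card_le_card_inter {l : ℝ} {s' u' : Finset α} (hst : NearlyAgree b s t)
    (htu : NearlyAgree b t u) (hb : b < 1) (hs : (#(s \ s') : ℝ) < l * #s)
    (hu : (#(u \ u') : ℝ) < l * #u) :
    (1 / 2 - b / (2 * (1 - b)) - l) * (#s + #u) ≤ #(s' ∩ u') := by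
  have hb' : 0 < 1 - b := sub_pos.2 hb
  have hsu : (#(s ∆ u) : ℝ) ≤ b / (1 - b) * (#s + #u) := by
    rw [div_mul_eq_mul_div, le_div_iff₀ hb']
    linarith [one_sub_mul_card_symmDiff_le hst htu hb.le]
  have hinter : (#(s ∆ u) : ℝ) + 2 * #(s ∩ u) = #s + #u :=
    mod_cast card_symmDiff_add_two_mul_card_inter s u
  have hsparse : (#(s ∩ u) : ℝ) ≤ #(s' ∩ u') + #(s \ s') + #(u \ u') :=
    mod_cast card_inter_le_card_inter_add_card_sdiff_add_card_sdiff s u s' u'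
  rw [mul_comm 2, ← div_div]
  linarith

end NearlyAgree

end Finset

theorem heavy_light_common_neighbors_general
    {V : Type*} [DecidableEq V]
    (β β' lam lam' T : ℝ)
    (hββ' : β + β' < 1)
    (hC : 0 < 1 / 2 - (β + β') / (2 * (1 - β - β')) - (lam + lam'))
    (hT : T ≥ 2 / ((1 / 2 - (β + β') / (2 * (1 - β - β')) - (lam + lam')) * (2 - β - β')))
    (Nx Ny Nz Ntx Ntz : Finset V)
    (hdx : (Nx.card : ℝ) ≥ T) (hdy : (Ny.card : ℝ) ≥ T)
    (hagreexy : ((symmDiff Nx Ny).card : ℝ) < (β + β') * max (Nx.card : ℝ) (Ny.card : ℝ))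
    (hagreeyz : ((symmDiff Ny Nz).card : ℝ) < (β + β') * max (Ny.card : ℝ) (Nz.card : ℝ))
    (hlightx : ((Nx \ Ntx).card : ℝ) < (lam + lam') * Nx.card)
    (hlightz : ((Nz \ Ntz).card : ℝ) < (lam + lam') * Nz.card) :
    ((Ntx ∩ Ntz).card : ℝ) ≥ 2 := by
  rw [show (1 : ℝ) - β - β' = 1 - (β + β') by ring] at hC hT
  rw [show (2 : ℝ) - β - β' = 2 - (β + β') by ring] at hT
  set b := β + β'
  set C := 1 / 2 - b / (2 * (1 - b)) - (lam + lam')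
  have hCT : 2 ≤ C * ((2 - b) * T) := by
    rw [← mul_assoc, ← div_le_iff₀' (mul_pos hC (by linarith))]
    exact hT
  have hz : (1 - b) * T ≤ Nz.card :=
    (mul_le_mul_of_nonneg_left hdy (by linarith)).trans
      (Finset.NearlyAgree.one_sub_mul_card_le_right hagreeyz hββ'.le)
  calc 2 ≤ C * ((2 - b) * T) := hCT
    _ ≤ C * (Nx.card + Nz.card) := by gcongr; linarith
    _ ≤ (Ntx ∩ Ntz).card :=
      Finset.NearlyAgree.mul_card_add_card_le_card_inter hagreexy hagreeyz hββ' hlightx hlightz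

theorem heavy_light_common_neighbors
    {V : Type*} [DecidableEq V]
    (β β' lam lam' T : ℝ)
    (hβ : 0 ≤ β) (hβ' : 0 ≤ β') (hlam : 0 ≤ lam) (hlam' : 0 ≤ lam')
    (hββ' : β + β' < 1)
    (hC : 0 < 1 / 2 - (β + β') / (2 * (1 - β - β')) - (lam + lam'))
    (hT : T ≥ 2 / ((1 / 2 - (β + β') / (2 * (1 - β - β')) - (lam + lam')) * (2 - β - β')))
    (Nx Ny Nz Ntx Ntz : Finset V)
    (hsubx : Ntx ⊆ Nx) (hsubz : Ntz ⊆ Nz)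
    (hdx : (Nx.card : ℝ) ≥ T) (hdy : (Ny.card : ℝ) ≥ T)
    (hagreexy : ((symmDiff Nx Ny).card : ℝ) < (β + β') * max (Nx.card : ℝ) (Ny.card : ℝ))
    (hagreeyz : ((symmDiff Ny Nz).card : ℝ) < (β + β') * max (Ny.card : ℝ) (Nz.card : ℝ))
    (hlightx : ((Nx \ Ntx).card : ℝ) < (lam + lam') * Nx.card)
    (hlightz : ((Nz \ Ntz).card : ℝ) < (lam + lam') * Nz.card) :
    ((Ntx ∩ Ntz).card : ℝ) ≥ 2 :=
  heavy_light_common_neighbors_general β β' lam lam' T hββ' hC hT Nx Ny Nz Ntx Ntz hdx hdy hagreexy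
    hagreeyz hlightx hlightz
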